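/- arXiv:2505.06705 — 4 statements merged into one kernel-verified Lean document; each statement's English description precedes it below -/
import Mathlib

section
/- Let q ≥ 0 be an integer and let J' be a finite set of positive integers that is a disjoint union of singletons {2^i} and pairs {a, b} with a + b a power of 2, such that J' ∩ [1, 2^q] ⊆ {2^i : 0 ≤ i ≤ q−1}. Then there exists an integer m with 0 ≤ m ≤ 2^q − 1 such that the sum of the elements of J' is congruent to m modulo 2^{q+1}. -/
/-- `J` decomposes as a disjoint union of singletons `{2^i}` and pairs `{a, b}`
with `a + b` a power of 2. -/
def TotaroDecomp (J : Finset ℕ) : Prop :=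
  ∃ P : Finset (Finset ℕ),
    (P : Set (Finset ℕ)).PairwiseDisjoint id ∧
    P.biUnion id = J ∧
    ∀ p ∈ P, (∃ i : ℕ, p = {2 ^ i}) ∨
      (∃ a b c : ℕ, a ≠ b ∧ p = {a, b} ∧ a + b = 2 ^ c)

/-!
The sum splits over the blocks of the decomposition. A block `{2^i}` with `i < q` is small, and
distinct small blocks add up to at most `1 + 2 + ⋯ + 2^(q-1) = 2^q - 1`. Every other block sums
to a power of 2 that is at least `2^(q+1)`: for a singleton `{2^i}` with `i ≥ q` the hypothesis
excludes `i = q`, and a pair `{a, b}` with `a + b = 2^c ≤ 2^q` would consist of two distinct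
powers of 2, whose sum is never a power of 2.
-/

open Finset

lemma Nat.two_pow_add_two_pow_ne_two_pow {i j c : ℕ} (hij : i ≠ j) : 2 ^ i + 2 ^ j ≠ 2 ^ c := by
  wlog hlt : i < j generalizing i j
  · rw [Nat.add_comm]
    exact this hij.symm (by omega)
  intro h
  have hj : 2 ^ j < 2 ^ c := h ▸ Nat.lt_add_of_pos_left (by positivity)
  have hc : 2 ^ c < 2 ^ (j + 1) := by
    rw [← h, pow_succ]
    have := Nat.pow_lt_pow_right one_lt_two hlt
    omega
  rw [Nat.pow_lt_pow_iff_right (by norm_num)] at hj hc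
  omega

lemma sum_lt_two_pow_of_forall_eq_two_pow {q : ℕ} {s : Finset ℕ}
    (hs : ∀ x ∈ s, ∃ i < q, x = 2 ^ i) : ∑ x ∈ s, x < 2 ^ q :=
  calc ∑ x ∈ s, x ≤ ∑ x ∈ (range q).image (2 ^ ·), x := by
        refine sum_le_sum_of_subset fun x hx => ?_
        obtain ⟨i, hi, rfl⟩ := hs x hx
        exact mem_image_of_mem _ (mem_range.2 hi)
    _ = ∑ i ∈ range q, 2 ^ i := sum_image fun _ _ _ _ h => Nat.pow_right_injective le_rfl h
    _ < 2 ^ q := Nat.geomSum_lt le_rfl fun _ => mem_range.1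

lemma lt_of_two_pow_mem_of_le {q i : ℕ} {J : Finset ℕ}
    (hsmall : ∀ x ∈ J, x ≤ 2 ^ q → ∃ i : ℕ, i < q ∧ x = 2 ^ i)
    (hi : 2 ^ i ∈ J) (hiq : q ≤ i) : q < i := by
  refine lt_of_le_of_ne hiq fun hqi => ?_
  subst hqi
  obtain ⟨j, hj, hje⟩ := hsmall _ hi le_rfl
  exact hj.ne' (Nat.pow_right_injective le_rfl hje)

lemma lt_of_add_eq_two_pow {q a b c : ℕ} {J : Finset ℕ}
    (hsmall : ∀ x ∈ J, x ≤ 2 ^ q → ∃ i : ℕ, i < q ∧ x = 2 ^ i)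
    (ha : a ∈ J) (hb : b ∈ J) (hab : a ≠ b) (habc : a + b = 2 ^ c) : q < c := by
  by_contra! hcq
  have hle : 2 ^ c ≤ 2 ^ q := Nat.pow_le_pow_right (by norm_num) hcq
  have hbq : b ≤ 2 ^ q := by omega
  obtain ⟨i, -, rfl⟩ := hsmall a ha (by omega)
  obtain ⟨j, -, rfl⟩ := hsmall b hb hbq
  exact Nat.two_pow_add_two_pow_ne_two_pow (fun h => hab (by rw [h])) habc

lemma eq_two_pow_or_two_pow_dvd_sum {q : ℕ} {J p : Finset ℕ}
    (hsmall : ∀ x ∈ J, x ≤ 2 ^ q → ∃ i : ℕ, i < q ∧ x = 2 ^ i) (hpJ : p ⊆ J)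
    (hp : (∃ i : ℕ, p = {2 ^ i}) ∨ (∃ a b c : ℕ, a ≠ b ∧ p = {a, b} ∧ a + b = 2 ^ c)) :
    (∃ i < q, p = {2 ^ i}) ∨ 2 ^ (q + 1) ∣ ∑ x ∈ p, x := by
  rcases hp with ⟨i, rfl⟩ | ⟨a, b, c, hab, rfl, habc⟩
  · rcases lt_or_ge i q with hiq | hiq
    · exact .inl ⟨i, hiq, rfl⟩
    · have hi := lt_of_two_pow_mem_of_le hsmall (hpJ (mem_singleton_self _)) hiq
      exact .inr (by simpa using pow_dvd_pow 2 hi)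
  · have hc := lt_of_add_eq_two_pow hsmall (hpJ (by simp)) (hpJ (by simp)) hab habc
    exact .inr (by simpa [sum_pair hab, habc] using pow_dvd_pow 2 hc)

theorem stmt_7_general (q : ℕ) (J' : Finset ℕ)
    (hdec : TotaroDecomp J')
    (hsmall : ∀ x ∈ J', x ≤ 2 ^ q → ∃ i : ℕ, i < q ∧ x = 2 ^ i) :
    ∃ m : ℕ, m ≤ 2 ^ q - 1 ∧ (∑ x ∈ J', x) ≡ m [MOD 2 ^ (q + 1)] := by
  classical
  obtain ⟨P, hdisj, rfl, hblocks⟩ := hdec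
  let small (p : Finset ℕ) : Prop := ∃ i < q, p = {2 ^ i}
  refine ⟨∑ p ∈ P.filter small, ∑ x ∈ p, x, ?_, ?_⟩
  · refine (sum_biUnion (hdisj.subset (coe_subset.2 (filter_subset _ _)))).symm.trans_le
      (Nat.le_sub_one_of_lt (sum_lt_two_pow_of_forall_eq_two_pow fun x hx => ?_))
    obtain ⟨p, hp, hxp⟩ := mem_biUnion.1 hx
    obtain ⟨-, i, hi, rfl⟩ := mem_filter.1 hp
    exact ⟨i, hi, mem_singleton.1 hxp⟩
  · have hlarge : 2 ^ (q + 1) ∣ ∑ p ∈ P.filter (¬ small ·), ∑ x ∈ p, x :=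
      dvd_sum fun p hp => by
        obtain ⟨hpP, hnot⟩ := mem_filter.1 hp
        exact (eq_two_pow_or_two_pow_dvd_sum hsmall (subset_biUnion_of_mem id hpP)
          (hblocks p hpP)).resolve_left hnot
    rw [sum_biUnion hdisj, ← sum_filter_add_sum_filter_not P small]
    simpa using (Nat.modEq_zero_iff_dvd.2 hlarge).add_left (∑ p ∈ P.filter small, ∑ x ∈ p, x)

theorem stmt_7 (q : ℕ) (J' : Finset ℕ) (hpos : ∀ x ∈ J', 0 < x)
    (hdec : TotaroDecomp J')
    (hsmall : ∀ x ∈ J', x ≤ 2 ^ q → ∃ i : ℕ, i < q ∧ x = 2 ^ i) :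
    ∃ m : ℕ, m ≤ 2 ^ q - 1 ∧ (∑ x ∈ J', x) ≡ m [MOD 2 ^ (q + 1)] :=
  stmt_7_general q J' hdec hsmall
end

section
/- Let F be the polynomial ring over the field with two elements in variables c_1, …, c_N, and let I be the ideal generated by the squares c_j^2 for 1 ≤ j ≤ N. For any k with 1 ≤ k ≤ N, the sum over all compositions (i_1, …, i_s) of k with all parts at most N of the products c_{i_1}·…·c_{i_s} is congruent to c_k modulo I. -/
/-!
Reversal of blocks is an involution on compositions of `k` that preserves the monomial
`c_{i_1} ⋯ c_{i_s}`, so in characteristic 2 the compositions that are not palindromes cancel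
in pairs. A palindrome with at least two blocks repeats a part, so its monomial is divisible by
a square and lies in `I`; the only remaining palindrome is the one-block composition `(k)`.
-/

open MvPolynomial

theorem List.length_le_one_of_nodup_of_reverse_eq {α : Type*} {l : List α} (hl : l.Nodup)
    (h : l.reverse = l) : l.length ≤ 1 := by
  by_contra! hlen
  have hends : l[0] = l[l.length - 1] := by
    conv_lhs => rw [← List.getElem_of_eq h (by rw [List.length_reverse]; omega)]
    simp
  have := hl.getElem_inj_iff.mp hends
  omega

theorem Composition.eq_single_of_reverse_eq_of_nodup {n : ℕ} (hn : 0 < n) {c : Composition n}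
    (hrev : c.reverse = c) (hnd : c.blocks.Nodup) : c = single n hn :=
  (eq_single_iff_length hn).mpr <| le_antisymm
    (List.length_le_one_of_nodup_of_reverse_eq hnd (congrArg blocks hrev)) (c.length_pos_of_pos hn)

theorem Ideal.list_prod_map_mem_of_not_nodup {R ι : Type*} [CommSemiring R] {I : Ideal R}
    {f : ι → R} {l : List ι} (hl : ¬ l.Nodup) (hsq : ∀ i ∈ l, f i ^ 2 ∈ I) :
    (l.map f).prod ∈ I := by
  obtain ⟨i, hi⟩ := List.exists_duplicate_iff_not_nodup.mpr hl
  have hdvd : f i ^ 2 ∣ (l.map f).prod := by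
    simpa [sq] using ((List.duplicate_iff_sublist.mp hi).map f).prod_dvd_prod
  exact I.mem_of_dvd hdvd (hsq i hi.mem)

theorem CharTwo.sum_filter_ne_self_eq_zero {α R : Type*} [Fintype α] [DecidableEq α] [Ring R]
    [CharP R 2] {σ : α → α} (hσ : Function.Involutive σ) {f : α → R} (hf : ∀ a, f (σ a) = f a) :
    ∑ a with σ a ≠ a, f a = 0 :=
  Finset.sum_involution (fun a _ => σ a)
    (fun a _ => by rw [hf]; exact CharTwo.add_self_eq_zero _)
    (fun a ha _ => by simpa using ha)
    (fun a ha => by simpa [hσ a] using (Finset.mem_filter.mp ha).2.symm)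
    (fun a _ => hσ a)

theorem stmt_14_general (N : ℕ) (k : ℕ) (hk : 1 ≤ k) (hkN : k ≤ N)
    (I : Ideal (MvPolynomial ℕ (ZMod 2)))
    (hI : I = Ideal.span {p | ∃ j : ℕ, 1 ≤ j ∧ j ≤ N ∧ p = (X j : MvPolynomial ℕ (ZMod 2)) ^ 2}) :
    (∑ cmp : Composition k,
        if ∀ p ∈ cmp.blocks, p ≤ N then ((cmp.blocks.map X).prod : MvPolynomial ℕ (ZMod 2)) else 0)
      - X k ∈ I := by
  set f : Composition k → MvPolynomial ℕ (ZMod 2) := fun c =>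
    if ∀ p ∈ c.blocks, p ≤ N then (c.blocks.map X).prod else 0
  change ∑ c, f c - X k ∈ I
  have hf_reverse : ∀ c, f c.reverse = f c := fun c => by simp [f, List.prod_reverse]
  have hf_single : f (.single k hk) = X k := by simp [f, hkN]
  have hf_mem : ∀ c : Composition k, c.reverse = c → c ≠ .single k hk → f c ∈ I := by
    intro c hrev hne
    have hnd : ¬ c.blocks.Nodup := fun hnd => hne (c.eq_single_of_reverse_eq_of_nodup hk hrev hnd)
    simp only [f]
    split_ifs with hle
    · exact Ideal.list_prod_map_mem_of_not_nodup hnd fun i hi =>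
        hI ▸ Ideal.subset_span ⟨i, c.blocks_pos hi, hle i hi, rfl⟩
    · exact I.zero_mem
  have hsingle : Composition.single k hk ∈ ({c | c.reverse = c} : Finset (Composition k)) := by
    simp
  rw [← Finset.sum_filter_add_sum_filter_not _ (fun c => c.reverse = c),
    CharTwo.sum_filter_ne_self_eq_zero Composition.reverse_involutive hf_reverse, add_zero,
    ← Finset.add_sum_erase _ _ hsingle, hf_single, add_sub_cancel_left]
  refine Ideal.sum_mem _ fun c hc => ?_
  obtain ⟨hne, hc⟩ := Finset.mem_erase.mp hc
  exact hf_mem c (Finset.mem_filter.mp hc).2 hne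

theorem stmt_14 (N : ℕ) (hN : 1 ≤ N) (k : ℕ) (hk : 1 ≤ k) (hkN : k ≤ N)
    (I : Ideal (MvPolynomial ℕ (ZMod 2)))
    (hI : I = Ideal.span {p | ∃ j : ℕ, 1 ≤ j ∧ j ≤ N ∧ p = (X j : MvPolynomial ℕ (ZMod 2)) ^ 2}) :
    (∑ cmp : Composition k,
        if ∀ p ∈ cmp.blocks, p ≤ N then ((cmp.blocks.map X).prod : MvPolynomial ℕ (ZMod 2)) else 0)
      - X k ∈ I :=
  stmt_14_general N k hk hkN I hI
end

section
/- Let n ≥ 2, let F_2 be the field with two elements, and let A = F_2[c_1, …, c_{n−1}][t]/(t^n + c_1 t^{n−1} + c_2 t^{n−2} + ⋯ + c_{n−1} t). For every integer k ≥ 1, in A one has t^{n−1+k} = Σ_{j=1}^{n−1} t^{n−j} · S_{k+j−1, j}, where S_{m,j} denotes the sum over all compositions (i_1, …, i_s) of m with i_1 ≥ j and all parts at most n−1 of the products c_{i_1}⋯c_{i_s}. -/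
/-!
Splitting off the first part of a composition gives `S_{j+m,j} = S_{j+m,j+1} + c_j S_{m,1}`,
while `S_{m,j} = 0` as soon as `j > n - 1`. Hence the right-hand side `T_k` satisfies
`T_{k+1} = t T_k`: multiplying by `t` shifts the index `j` and leaves over `t^n S_{k,1}`,
which the relation `t^n = Σ c_j t^{n-j}` turns into the missing terms `c_j t^{n-j} S_{k,1}`.
Induction starts from `T_1 = Σ c_j t^{n-j} = t^n`.
-/

open MvPolynomial

/-- Sum over all compositions of `m` with first part at least `j` and all parts
at most `n - 1` of the products of the corresponding variables. -/
noncomputable def compSumLE (n m j : ℕ) : MvPolynomial ℕ (ZMod 2) :=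
  ∑ cmp : Composition m,
    if j ≤ cmp.blocks.headI ∧ ∀ p ∈ cmp.blocks, p ≤ n - 1 then
      ((cmp.blocks.map X).prod : MvPolynomial ℕ (ZMod 2))
    else 0

open Finset

namespace Composition

theorem headI_mem {m : ℕ} (hm : 0 < m) (c : Composition m) : c.blocks.headI ∈ c.blocks := by
  cases h : c.blocks with
  | nil => exact absurd (c.blocks_eq_nil.1 h) hm.ne'
  | cons a l => exact List.mem_cons_self

theorem headI_le {m : ℕ} (c : Composition m) : c.blocks.headI ≤ m := by
  rcases Nat.eq_zero_or_pos m with rfl | hm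
  · simp [c.blocks_eq_nil.2 rfl]
  · exact c.blocks_le (c.headI_mem hm)

theorem exists_eq_append_single {j m : ℕ} (hj : 0 < j) (c : Composition (j + m))
    (hc : c.blocks.headI = j) : ∃ d : Composition m, c = (single j hj).append d := by
  have hsum := c.blocks_sum
  cases h : c.blocks with
  | nil => rw [h] at hc; exact absurd hc.symm hj.ne'
  | cons a l =>
    simp only [h, List.headI_cons] at hc
    subst hc
    refine ⟨⟨l, fun hi => c.blocks_pos (h ▸ List.mem_cons_of_mem _ hi), ?_⟩, ?_⟩
    · rw [h, List.sum_cons] at hsum; omega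
    · ext1; simp [h, single_blocks]

end Composition

theorem compSumLE_eq_zero_of_lt {n m j : ℕ} (h : min m (n - 1) < j) : compSumLE n m j = 0 := by
  refine sum_eq_zero fun c _ => if_neg ?_
  rintro ⟨hj, hle⟩
  have h₁ := c.headI_le
  rcases Nat.eq_zero_or_pos m with rfl | hm
  · omega
  · have h₂ := hle _ (c.headI_mem hm)
    omega

theorem compSumLE_one {n m : ℕ} (hm : 0 < m) : compSumLE n m 1 = compSumLE n m 0 := by
  refine sum_congr rfl fun c _ => ?_
  simp [Nat.one_le_iff_ne_zero, (c.blocks_pos (c.headI_mem hm)).ne']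

theorem compSumLE_zero_zero (n : ℕ) : compSumLE n 0 0 = 1 := by
  rw [compSumLE, sum_eq_single_of_mem (Composition.ones 0) (mem_univ _)]
  · simp
  · intro c _ hc
    exact absurd (Composition.ext (by simp [c.blocks_eq_nil])) hc

theorem compSumLE_eq_add_sum_headI_eq (n m j : ℕ) :
    compSumLE n m j = compSumLE n m (j + 1) +
      ∑ c : Composition m,
        if c.blocks.headI = j ∧ ∀ p ∈ c.blocks, p ≤ n - 1 then (c.blocks.map X).prod else 0 := by
  rw [compSumLE, compSumLE, ← sum_add_distrib]
  refine sum_congr rfl fun c _ => ?_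
  by_cases hq : ∀ p ∈ c.blocks, p ≤ n - 1
  · simp only [and_iff_left hq]
    split_ifs <;> first | omega | simp
  · simp [hq]

theorem sum_headI_eq_mul_compSumLE {n j : ℕ} (hj : 0 < j) (hjn : j ≤ n - 1) (m : ℕ) :
    (∑ c : Composition (j + m),
      if c.blocks.headI = j ∧ ∀ p ∈ c.blocks, p ≤ n - 1 then (c.blocks.map X).prod else 0) =
      X j * compSumLE n m 0 := by
  rw [compSumLE, mul_sum]
  simp only [zero_le, true_and, mul_ite, mul_zero]
  rw [← sum_filter, ← sum_filter]
  refine (sum_bij (fun d _ => (Composition.single j hj).append d) ?_ ?_ ?_ ?_).symm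
  · intro d hd
    simp_all [Composition.single_blocks]
  · intro d₁ _ d₂ _ h
    ext1
    simpa [Composition.single_blocks] using congrArg Composition.blocks h
  · intro c hc
    simp only [mem_filter, mem_univ, true_and] at hc
    obtain ⟨d, rfl⟩ := Composition.exists_eq_append_single hj c hc.1
    refine ⟨d, ?_, rfl⟩
    simp_all [Composition.single_blocks]
  · intro d _
    simp [Composition.single_blocks]

theorem compSumLE_self {n j : ℕ} (hj : 0 < j) (hjn : j ≤ n - 1) : compSumLE n j j = X j := by
  -- splitting off the first part `j` of a composition of `j + 0` leaves the empty composition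
  have h := compSumLE_eq_add_sum_headI_eq n (j + 0) j
  rwa [sum_headI_eq_mul_compSumLE hj hjn, compSumLE_eq_zero_of_lt (j := j + 1) (by omega),
    compSumLE_zero_zero, zero_add, mul_one] at h

theorem compSumLE_add_eq {n j m : ℕ} (hj : 0 < j) (hjn : j ≤ n - 1) (hm : 0 < m) :
    compSumLE n (j + m) j = compSumLE n (j + m) (j + 1) + X j * compSumLE n m 1 := by
  rw [compSumLE_eq_add_sum_headI_eq, sum_headI_eq_mul_compSumLE hj hjn, compSumLE_one hm]

theorem pow_add_eq_sum_compSumLE {R : Type*} [CommSemiring R]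
    (f : MvPolynomial ℕ (ZMod 2) →+* R) {n : ℕ} (hn : 0 < n) (t : R)
    (hrel : t ^ n = ∑ i ∈ Ico 1 n, f (X i) * t ^ (n - i)) (k : ℕ) :
    t ^ (n + k) = ∑ j ∈ Ico 1 n, t ^ (n - j) * f (compSumLE n (k + j) j) := by
  induction k with
  | zero =>
    rw [add_zero, hrel]
    refine sum_congr rfl fun j hj => ?_
    rw [mem_Ico] at hj
    rw [zero_add, compSumLE_self (by omega) (by omega), mul_comm]
  | succ k ih =>
    set g : ℕ → R := fun a => t ^ (n - a) * f (compSumLE n (k + 1 + a) (a + 1)) with hg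
    have hmul : t ^ (n + (k + 1)) = ∑ a ∈ range n, g a := by
      have hlast : g (n - 1) = 0 := by
        have hS : compSumLE n (k + 1 + (n - 1)) (n - 1 + 1) = 0 :=
          compSumLE_eq_zero_of_lt (by omega)
        simp only [hg, hS, map_zero, mul_zero]
      conv_rhs => rw [← Nat.sub_add_cancel hn, sum_range_succ, hlast, add_zero]
      rw [← add_assoc, pow_succ, ih, sum_mul, sum_Ico_eq_sum_range]
      refine sum_congr rfl fun a ha => ?_
      rw [mem_range] at ha
      simp only [hg]
      rw [show n - a = n - (1 + a) + 1 by omega, pow_succ, add_comm a 1, add_assoc]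
      ring
    have hsplit : ∑ j ∈ Ico 1 n, t ^ (n - j) * f (compSumLE n (k + 1 + j) j) =
        g 0 + ∑ j ∈ Ico 1 n, g j := by
      have hterm : ∀ j ∈ Ico 1 n, t ^ (n - j) * f (compSumLE n (k + 1 + j) j) =
          g j + f (X j) * t ^ (n - j) * f (compSumLE n (k + 1) 1) := by
        intro j hj
        rw [mem_Ico] at hj
        simp only [hg]
        rw [add_comm (k + 1) j, compSumLE_add_eq (by omega) (by omega) (by omega), map_add,
          map_mul]
        ring
      rw [sum_congr rfl hterm, sum_add_distrib, ← sum_mul, ← hrel, add_comm]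
      simp [hg]
    rw [hmul, hsplit, sum_range_eq_add_Ico _ hn]

theorem stmt_15 (n : ℕ) (hn : 2 ≤ n)
    (I : Ideal (MvPolynomial ℕ (ZMod 2)))
    (hI : I = Ideal.span
      {(X 0 : MvPolynomial ℕ (ZMod 2)) ^ n +
        ∑ i ∈ Finset.Icc 1 (n - 1), X i * (X 0 : MvPolynomial ℕ (ZMod 2)) ^ (n - i)})
    (k : ℕ) (hk : 1 ≤ k) :
    Ideal.Quotient.mk I ((X 0 : MvPolynomial ℕ (ZMod 2)) ^ (n - 1 + k)) =
      ∑ j ∈ Finset.Icc 1 (n - 1),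
        Ideal.Quotient.mk I ((X 0 : MvPolynomial ℕ (ZMod 2)) ^ (n - j) *
          compSumLE n (k + j - 1) j) := by
  have hIco : Icc 1 (n - 1) = Ico 1 n := by
    ext
    simp only [mem_Icc, mem_Ico]
    omega
  have hrel : Ideal.Quotient.mk I (X 0) ^ n =
      ∑ i ∈ Ico 1 n, Ideal.Quotient.mk I (X i) * Ideal.Quotient.mk I (X 0) ^ (n - i) := by
    simp only [← map_pow, ← map_mul, ← map_sum]
    rw [Ideal.Quotient.eq, CharTwo.sub_eq_add, ← hIco, hI]
    exact Ideal.subset_span rfl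
  obtain ⟨k, rfl⟩ := Nat.exists_eq_add_of_le' hk
  rw [show n - 1 + (k + 1) = n + k by omega, map_pow,
    pow_add_eq_sum_compSumLE _ (by omega) _ hrel k, hIco]
  refine sum_congr rfl fun j _ => ?_
  rw [map_mul, map_pow, show k + 1 + j - 1 = k + j by omega]
end

section
/- Let B = Z[e_1, …, e_7]/I, where I is the ideal generated by the elements e_i^2 − 2 e_{i−1} e_{i+1} + 2 e_{i−2} e_{i+2} − ⋯ + (−1)^i e_{2i} for 1 ≤ i ≤ 7, with the convention e_0 = 1 and e_j = 0 for j ≥ 8. Then in B, e_1^8 lies in the ideal 2B, i.e., e_1^8 is divisible by 2 in B. -/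
/-! In `B`, `e₁⁸ = e₂⁴ = (2e₁e₃ - e₄)² ≡ e₄² (mod 2B)`, and the fourth relation says that
`e₄² = 2(e₃e₅ - e₂e₆ + e₁e₇)`. -/

open MvPolynomial

/-- The ideal of relations of the Chow ring of the variety of maximal isotropic
subspaces in type `D₈`, with `e_i = X (i-1)` and `e_j = 0` for `j ≥ 8`. -/
noncomputable def relD8 : Ideal (MvPolynomial (Fin 7) ℤ) :=
  Ideal.span
    { X 0 ^ 2 - X 1,
      X 1 ^ 2 - 2 * X 0 * X 2 + X 3,
      X 2 ^ 2 - 2 * X 1 * X 3 + 2 * X 0 * X 4 - X 5,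
      X 3 ^ 2 - 2 * X 2 * X 4 + 2 * X 1 * X 5 - 2 * X 0 * X 6,
      X 4 ^ 2 - 2 * X 3 * X 5 + 2 * X 2 * X 6,
      X 5 ^ 2 - 2 * X 4 * X 6,
      X 6 ^ 2 }

theorem pow_eight_eq_two_mul {R : Type*} [CommRing R] {a b c d f : R}
    (hab : a ^ 2 = b) (hb : b ^ 2 = 2 * c - d) (hd : d ^ 2 = 2 * f) :
    a ^ 8 = 2 * (2 * c ^ 2 - 2 * c * d + f) := by
  calc a ^ 8 = (b ^ 2) ^ 2 := by rw [← hab]; ring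
    _ = 4 * c ^ 2 - 4 * c * d + d ^ 2 := by rw [hb]; ring
    _ = _ := by rw [hd]; ring

theorem mk_relD8_X_zero_sq :
    Ideal.Quotient.mk relD8 (X 0) ^ 2 = Ideal.Quotient.mk relD8 (X 1) := by
  rw [← map_pow, Ideal.Quotient.eq]
  exact Ideal.subset_span (by simp)

theorem mk_relD8_X_one_sq :
    Ideal.Quotient.mk relD8 (X 1) ^ 2 =
      2 * (Ideal.Quotient.mk relD8 (X 0) * Ideal.Quotient.mk relD8 (X 2)) -
        Ideal.Quotient.mk relD8 (X 3) := by
  have h : Ideal.Quotient.mk relD8 (X 1 ^ 2 - 2 * X 0 * X 2 + X 3) = 0 :=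
    Ideal.Quotient.eq_zero_iff_mem.mpr (Ideal.subset_span (by simp))
  simp only [map_add, map_sub, map_mul, map_pow, map_ofNat] at h
  linear_combination h

theorem mk_relD8_X_three_sq :
    Ideal.Quotient.mk relD8 (X 3) ^ 2 =
      2 * Ideal.Quotient.mk relD8 (X 2 * X 4 - X 1 * X 5 + X 0 * X 6) := by
  have h : Ideal.Quotient.mk relD8
      (X 3 ^ 2 - 2 * X 2 * X 4 + 2 * X 1 * X 5 - 2 * X 0 * X 6) = 0 :=
    Ideal.Quotient.eq_zero_iff_mem.mpr (Ideal.subset_span (by simp))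
  simp only [map_add, map_sub, map_mul, map_pow, map_ofNat] at h ⊢
  linear_combination h

theorem stmt_17 :
    ∃ y : MvPolynomial (Fin 7) ℤ ⧸ relD8,
      Ideal.Quotient.mk relD8 ((X 0 : MvPolynomial (Fin 7) ℤ) ^ 8) = 2 * y := by
  rw [map_pow]
  exact ⟨_, pow_eight_eq_two_mul mk_relD8_X_zero_sq mk_relD8_X_one_sq mk_relD8_X_three_sq⟩
end
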